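/- For all positive integers p and q, in the shuffle algebra Sh_ℚ[{a,b}] one has b(ab)^{p-1} ⧢ b(ab)^{q-1} = (1/2) Σ_{n=1}^{min(p,q)} 4^n · binom(p+q-2n, p-n) · U_{p+q,n}. -/

import Mathlib

/-- The two-letter alphabet `{a, b}`. -/
inductive AB : Type
  | a : AB
  | b : AB
  deriving DecidableEq

/-- The shuffle product of two words, as a rational linear combination of
words, defined by the recursion `1 ⧢ w = w ⧢ 1 = w` and
`xu ⧢ yv = x(u ⧢ yv) + y(xu ⧢ v)`. -/
noncomputable def shuffleWord {A : Type*} : List A → List A → (List A →₀ ℚ)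
  | [], w => Finsupp.single w 1
  | u, [] => Finsupp.single u 1
  | x :: u, y :: v =>
      Finsupp.mapDomain (List.cons x) (shuffleWord u (y :: v)) +
      Finsupp.mapDomain (List.cons y) (shuffleWord (x :: u) v)
  termination_by u v => u.length + v.length
  decreasing_by all_goals simp_wf

/-- The word `(ab)^p`. -/
def abpow (p : ℕ) : List AB := (List.replicate p [AB.a, AB.b]).flatten

/-- The number of occurrences of the subword `a²` in a word. -/
def countAA : List AB → ℕ
  | AB.a :: AB.a :: t => countAA (AB.a :: t) + 1
  | _ :: t => countAA t
  | [] => 0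

/-- The number of occurrences of the subword `b²` in a word. -/
def countBB : List AB → ℕ
  | AB.b :: AB.b :: t => countBB (AB.b :: t) + 1
  | _ :: t => countBB t
  | [] => 0

/-- `T_{m,n}`: for `m ≥ n ≥ 0`, the sum of the distinct words occurring in the
shuffle product `(ab)^n ⧢ (ab)^{m-n}` in which the subword `a²` appears
exactly `n` times; `0` for all other pairs. -/
noncomputable def T (m n : ℕ) : List AB →₀ ℚ :=
  if n ≤ m then
    ∑ w ∈ (shuffleWord (abpow n) (abpow (m - n))).support.filter
        (fun w => countAA w = n), Finsupp.single w 1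
  else 0

/-- `U_{m,n}`: for `m ≥ n + 1 ≥ 2`, the sum of the distinct words arising in
the shuffle product `b(ab)^{n-1} ⧢ b(ab)^{m-n-1}` in which the subword `b²`
occurs exactly `n` times; `0` for all other pairs. -/
noncomputable def U (m n : ℕ) : List AB →₀ ℚ :=
  if 1 ≤ n ∧ n + 1 ≤ m then
    ∑ w ∈ (shuffleWord (AB.b :: abpow (n - 1)) (AB.b :: abpow (m - n - 1))).support.filter
        (fun w => countBB w = n), Finsupp.single w 1
  else 0

namespace ABaux
open AB

/- ## shuffle equations -/
theorem shuffle_nil_left {A : Type*} (w : List A) : shuffleWord [] w = Finsupp.single w 1 := by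
  rw [shuffleWord]

theorem shuffle_cons_nil {A : Type*} (x : A) (u : List A) :
    shuffleWord (x :: u) [] = Finsupp.single (x :: u) 1 := by
  rw [shuffleWord]; simp

theorem shuffle_cons_cons {A : Type*} (x y : A) (u v : List A) :
    shuffleWord (x :: u) (y :: v) =
      Finsupp.mapDomain (List.cons x) (shuffleWord u (y :: v)) +
      Finsupp.mapDomain (List.cons y) (shuffleWord (x :: u) v) := by
  rw [shuffleWord]

theorem shuffle_comm {A : Type*} : ∀ u v : List A, shuffleWord u v = shuffleWord v u
  | [], [] => rfl
  | [], y :: v => by rw [shuffle_nil_left, shuffle_cons_nil]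
  | x :: u, [] => by rw [shuffle_nil_left, shuffle_cons_nil]
  | x :: u, y :: v => by
      rw [shuffle_cons_cons, shuffle_cons_cons, shuffle_comm u (y :: v),
        shuffle_comm (x :: u) v, add_comm]
  termination_by u v => u.length + v.length

/- ## mapDomain evaluation -/
theorem md_same {A : Type*} (x : A) (f : List A →₀ ℚ) (w : List A) :
    Finsupp.mapDomain (List.cons x) f (x :: w) = f w :=
  Finsupp.mapDomain_apply (List.cons_injective) f w

theorem md_nil {A : Type*} (x : A) (f : List A →₀ ℚ) :
    Finsupp.mapDomain (List.cons x) f [] = 0 := by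
  apply Finsupp.mapDomain_notin_range
  rintro ⟨u, hu⟩; simp at hu

theorem md_ne {A : Type*} {x y : A} (h : y ≠ x) (f : List A →₀ ℚ) (w : List A) :
    Finsupp.mapDomain (List.cons x) f (y :: w) = 0 := by
  apply Finsupp.mapDomain_notin_range
  rintro ⟨u, hu⟩; simp at hu; exact h hu.1.symm

/- ## abpow -/
theorem abpow_zero : abpow 0 = [] := rfl
theorem abpow_succ (p : ℕ) : abpow (p + 1) = .a :: .b :: abpow p := by
  simp [abpow, List.replicate_succ]

theorem abpow_length (p : ℕ) : (abpow p).length = 2 * p := by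
  induction p with
  | zero => rfl
  | succ p ih => rw [abpow_succ]; simp [ih]; omega

/- ## combinatorial word functions -/
def okA : List AB → Bool
  | .a :: .a :: .a :: _ => false
  | _ :: t => okA t
  | [] => true

def okB : List AB → Bool
  | .b :: .b :: .b :: _ => false
  | _ :: t => okB t
  | [] => true

def dbl : List AB → List AB
  | .a :: .a :: t => .a :: dbl t
  | .b :: .b :: t => .b :: dbl t
  | .a :: .b :: t => dbl (.b :: t)
  | .b :: .a :: t => dbl (.a :: t)
  | _ => []
  termination_by l => l.length

mutual
def altA : List AB → Bool
  | [] => true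
  | .a :: t => altB t
  | _ => false
def altB : List AB → Bool
  | .b :: t => altA t
  | _ => false
end

@[simp] theorem dbl_nil : dbl [] = [] := by rw [dbl] <;> simp
@[simp] theorem dbl_single (x : AB) : dbl [x] = [] := by cases x <;> (rw [dbl] <;> simp)
@[simp] theorem dbl_aa (t : List AB) : dbl (.a :: .a :: t) = .a :: dbl t := by rw [dbl]
@[simp] theorem dbl_bb (t : List AB) : dbl (.b :: .b :: t) = .b :: dbl t := by rw [dbl]
@[simp] theorem dbl_ab (t : List AB) : dbl (.a :: .b :: t) = dbl (.b :: t) := by rw [dbl]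
@[simp] theorem dbl_ba (t : List AB) : dbl (.b :: .a :: t) = dbl (.a :: t) := by rw [dbl]

@[simp] theorem okA_nil : okA [] = true := rfl
@[simp] theorem okA_cons_b (t : List AB) : okA (.b :: t) = okA t := rfl
@[simp] theorem okA_single : okA [AB.a] = true := rfl
@[simp] theorem okA_ab (t : List AB) : okA (.a :: .b :: t) = okA (.b :: t) := rfl
@[simp] theorem okA_aab (t : List AB) : okA (.a :: .a :: .b :: t) = okA (.a :: .b :: t) := rfl
@[simp] theorem okA_aa_single : okA [AB.a, AB.a] = true := rfl
@[simp] theorem okA_aaa (t : List AB) : okA (.a :: .a :: .a :: t) = false := rfl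

@[simp] theorem okB_nil : okB [] = true := rfl
@[simp] theorem okB_cons_a (t : List AB) : okB (.a :: t) = okB t := rfl
@[simp] theorem okB_single : okB [AB.b] = true := rfl
@[simp] theorem okB_ba (t : List AB) : okB (.b :: .a :: t) = okB (.a :: t) := rfl
@[simp] theorem okB_bba (t : List AB) : okB (.b :: .b :: .a :: t) = okB (.b :: .a :: t) := rfl
@[simp] theorem okB_bb_single : okB [AB.b, AB.b] = true := rfl
@[simp] theorem okB_bbb (t : List AB) : okB (.b :: .b :: .b :: t) = false := rfl

@[simp] theorem altA_nil : altA [] = true := rfl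
@[simp] theorem altA_a (t : List AB) : altA (.a :: t) = altB t := rfl
@[simp] theorem altA_b (t : List AB) : altA (.b :: t) = false := rfl
@[simp] theorem altB_nil : altB [] = false := rfl
@[simp] theorem altB_b (t : List AB) : altB (.b :: t) = altA t := rfl
@[simp] theorem altB_a (t : List AB) : altB (.a :: t) = false := rfl

theorem okA_tail : ∀ (x : AB) (t : List AB), okA (x :: t) = true → okA t = true
  | .b, t => fun h => h
  | .a, [] => fun _ => rfl
  | .a, .b :: t => fun h => h
  | .a, .a :: [] => fun _ => rfl
  | .a, .a :: .b :: t => fun h => h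
  | .a, .a :: .a :: t => fun h => by simp at h

theorem okB_tail : ∀ (x : AB) (t : List AB), okB (x :: t) = true → okB t = true
  | .a, t => fun h => h
  | .b, [] => fun _ => rfl
  | .b, .a :: t => fun h => h
  | .b, .b :: [] => fun _ => rfl
  | .b, .b :: .a :: t => fun h => h
  | .b, .b :: .b :: t => fun h => by simp at h



/- ## counting lemmas -/
theorem length_counts : ∀ w : List AB, w.length = w.count .a + w.count .b
  | [] => rfl
  | x :: t => by
      cases x <;> simp [List.count_cons, length_counts t] <;> omega

theorem counta_dbl : ∀ w : List AB, okA w = true → 2 * (dbl w).count .a ≤ w.count .a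
  | [] => by simp
  | [x] => by cases x <;> simp
  | .a :: .a :: t => fun h => by
      have ht : okA t = true := okA_tail _ _ (okA_tail _ _ h)
      have ih := counta_dbl t ht
      rw [dbl_aa]
      simp only [List.count_cons]
      simp
      omega
  | .b :: .b :: t => fun h => by
      have ih := counta_dbl t (okA_tail _ _ (okA_tail _ _ h))
      rw [dbl_bb]
      simp only [List.count_cons] at *
      simp at *
      omega
  | .a :: .b :: t => fun h => by
      have ih := counta_dbl (.b :: t) (okA_tail _ _ h)
      rw [dbl_ab]
      simp only [List.count_cons] at *
      simp at *
      omega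
  | .b :: .a :: t => fun h => by
      have ih := counta_dbl (.a :: t) (okA_tail _ _ h)
      rw [dbl_ba]
      simp only [List.count_cons] at *
      simp at *
      omega
  termination_by w => w.length

theorem countb_dbl : ∀ w : List AB, okB w = true → 2 * (dbl w).count .b ≤ w.count .b
  | [] => by simp
  | [x] => by cases x <;> simp
  | .b :: .b :: t => fun h => by
      have ht : okB t = true := okB_tail _ _ (okB_tail _ _ h)
      have ih := countb_dbl t ht
      rw [dbl_bb]
      simp only [List.count_cons]
      simp
      omega
  | .a :: .a :: t => fun h => by
      have ih := countb_dbl t (okB_tail _ _ (okB_tail _ _ h))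
      rw [dbl_aa]
      simp only [List.count_cons] at *
      simp at *
      omega
  | .a :: .b :: t => fun h => by
      have ih := countb_dbl (.b :: t) (okB_tail _ _ h)
      rw [dbl_ab]
      simp only [List.count_cons] at *
      simp at *
      omega
  | .b :: .a :: t => fun h => by
      have ih := countb_dbl (.a :: t) (okB_tail _ _ h)
      rw [dbl_ba]
      simp only [List.count_cons] at *
      simp at *
      omega
  termination_by w => w.length

theorem alt_counts : ∀ l : List AB,
    (altA l = true → l.count .b = l.count .a) ∧
    (altB l = true → l.count .b = l.count .a + 1) := by
  intro l
  induction l with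
  | nil => simp
  | cons x t ih =>
      cases x
      · constructor
        · intro h; simp at h
          simp [List.count_cons, ih.2 h]
        · intro h; simp at h
      · constructor
        · intro h; simp at h
        · intro h; simp at h
          simp [List.count_cons, ih.1 h]

theorem altA_count_zero : ∀ l : List AB, altA l = true → l.count .b = 0 → l = [] := by
  intro l hA h0
  cases l with
  | nil => rfl
  | cons x t =>
      cases x
      · simp at hA
        have := (alt_counts t).2 hA
        simp [List.count_cons] at h0
        omega
      · simp at hA

theorem altB_count_pos : ∀ l : List AB, altB l = true → 1 ≤ l.count .b := by
  intro l h
  cases l with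
  | nil => simp at h
  | cons x t => cases x
                · simp at h
                · simp [List.count_cons]

/- ## countBB via dbl -/
theorem countBB_eq : ∀ w : List AB, okB w = true → countBB w = (dbl w).count .b
  | [] => by simp [countBB]
  | [x] => by cases x <;> simp [countBB]
  | .b :: .b :: t => fun h => by
      have ht : okB t = true := okB_tail _ _ (okB_tail _ _ h)
      have ih := countBB_eq t ht
      have hbt : countBB (.b :: t) = countBB t := by
        cases t with
        | nil => rfl
        | cons y t' => cases y
                       · rfl
                       · simp at h
      rw [show countBB (.b :: .b :: t) = countBB (.b :: t) + 1 from rfl, hbt, ih]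
      simp [List.count_cons]
  | .a :: .a :: t => fun h => by
      have := countBB_eq t (okB_tail _ _ (okB_tail _ _ h))
      rw [show countBB (.a :: .a :: t) = countBB t from rfl, this]; simp [List.count_cons]
  | .a :: .b :: t => fun h => by
      have := countBB_eq (.b :: t) (okB_tail _ _ h)
      rw [show countBB (.a :: .b :: t) = countBB (.b :: t) from rfl, this]; simp
  | .b :: .a :: t => fun h => by
      have := countBB_eq (.a :: t) (okB_tail _ _ h)
      rw [show countBB (.b :: .a :: t) = countBB (.a :: t) from rfl, this]; simp
  termination_by w => w.length



/- ## the binomial function co -/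
def co (s k : ℤ) : ℚ := if 0 ≤ k ∧ k ≤ s then (s.toNat.choose k.toNat : ℚ) else 0

theorem co_of_nonneg {s k : ℤ} (h : 0 ≤ k ∧ k ≤ s) : co s k = (s.toNat.choose k.toNat : ℚ) :=
  if_pos h

theorem co_of_not {s k : ℤ} (h : ¬(0 ≤ k ∧ k ≤ s)) : co s k = 0 := if_neg h

theorem co_zero {s : ℤ} (h : 0 ≤ s) : co s 0 = 1 := by
  rw [co_of_nonneg ⟨le_refl 0, h⟩]; simp

theorem co_self {s : ℤ} (h : 0 ≤ s) : co s s = 1 := by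
  rw [co_of_nonneg ⟨h, le_refl s⟩]; simp

theorem co_symm (s k : ℤ) : co s k = co s (s - k) := by
  unfold co
  by_cases h : 0 ≤ k ∧ k ≤ s
  · rw [if_pos h, if_pos (by omega)]
    have h1 : (s - k).toNat = s.toNat - k.toNat := by omega
    have h2 : k.toNat ≤ s.toNat := by omega
    rw [h1, Nat.choose_symm h2]
  · rw [if_neg h, if_neg (by omega)]

theorem co_pascal {s : ℤ} (k : ℤ) (hs : 0 ≤ s) : co (s + 1) k = co s (k - 1) + co s k := by
  unfold co
  by_cases hk0 : 0 ≤ k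
  · by_cases hks : k ≤ s
    · rcases eq_or_lt_of_le hk0 with h0 | hpos
      · rw [if_pos (by omega), if_neg (by omega), if_pos (by omega)]
        rw [show k.toNat = 0 by omega]
        simp
      · rw [if_pos (by omega), if_pos (by omega), if_pos (by omega)]
        have h1 : (s + 1).toNat = s.toNat + 1 := by omega
        have h2 : k.toNat = (k - 1).toNat + 1 := by omega
        rw [h1, h2, Nat.choose_succ_succ]
        push_cast; ring
    · by_cases hks1 : k ≤ s + 1
      · rw [if_pos (by omega), if_pos (by omega), if_neg (by omega)]
        rw [show k.toNat = (s + 1).toNat by omega, Nat.choose_self,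
          show (k - 1).toNat = s.toNat by omega, Nat.choose_self]
        norm_num
      · rw [if_neg (by omega), if_neg (by omega), if_neg (by omega)]; norm_num
  · rw [if_neg (by omega), if_neg (by omega), if_neg (by omega)]; norm_num

/- ## characterization of strictly alternating words -/
mutual
theorem char_b : ∀ (w : List AB) (m : ℕ), dbl w = [] → w.head? = some .b →
    w.getLast? = some .b → w.length = 2 * m + 1 → w = .b :: abpow m
  | .b :: w', m => fun hd _ hl hlen => by
      match w', m with
      | [], m =>
          have : m = 0 := by simp at hlen; omega
          subst this; rfl
      | .b :: t, m => simp at hd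
      | .a :: t, 0 => simp at hlen
      | .a :: t, m + 1 =>
          have h1 : dbl (.a :: t) = [] := by rw [dbl_ba] at hd; exact hd
          have h2 : (.a :: t : List AB).getLast? = some .b := by
            rw [List.getLast?_cons_cons] at hl; exact hl
          have h3 : (.a :: t : List AB).length = 2 * (m + 1) := by simp at hlen ⊢; omega
          have := char_a (.a :: t) (m + 1) h1 rfl h2 h3
          rw [this]
  | .a :: w', m => fun _ hd => by simp at hd
  | [], m => fun _ hd => by simp at hd
  termination_by w => w.length

theorem char_a : ∀ (w : List AB) (m : ℕ), dbl w = [] → w.head? = some .a →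
    w.getLast? = some .b → w.length = 2 * m → w = abpow m
  | .a :: w', m => fun hd _ hl hlen => by
      match w', m with
      | [], m => simp at hl
      | .a :: t, m => simp at hd
      | .b :: t, 0 => simp at hlen
      | .b :: t, m + 1 =>
          have h1 : dbl (.b :: t) = [] := by rw [dbl_ab] at hd; exact hd
          have h2 : (.b :: t : List AB).getLast? = some .b := by
            rw [List.getLast?_cons_cons] at hl; exact hl
          have h3 : (.b :: t : List AB).length = 2 * m + 1 := by simp at hlen ⊢; omega
          have := char_b (.b :: t) m h1 rfl h2 h3
          rw [abpow_succ, this]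
  | .b :: w', m => fun _ hd => by simp at hd
  | [], m => fun _ hd => by simp at hd
  termination_by w => w.length
end

/- ## facts about abpow words -/
theorem abpow_facts : ∀ m : ℕ, okA (abpow m) = true ∧ okB (abpow m) = true ∧
    dbl (abpow m) = [] ∧ okA (.b :: abpow m) = true ∧ okB (.b :: abpow m) = true ∧
    dbl (.b :: abpow m) = [] ∧ (.b :: abpow m : List AB).getLast? = some .b ∧
    (∀ hm : 1 ≤ m, (abpow m).head? = some .a ∧ (abpow m).getLast? = some .b) := by
  intro m
  induction m with
  | zero => simp [abpow_zero]
  | succ m ih =>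
      obtain ⟨h1, h2, h3, h4, h5, h6, h7, _⟩ := ih
      rw [abpow_succ]
      refine ⟨?_, ?_, ?_, ?_, ?_, ?_, ?_, ?_⟩
      · simpa using h4
      · simpa using h5
      · simpa using h6
      · simpa using h4
      · simpa using h5
      · simpa using h6
      · rw [List.getLast?_cons_cons, List.getLast?_cons_cons]; exact h7
      · intro _
        refine ⟨rfl, ?_⟩
        rw [List.getLast?_cons_cons]; exact h7



/- ## the closed formulas -/
def nb (w : List AB) : ℕ := (dbl w).count .b
def na (w : List AB) : ℕ := (dbl w).count .a

def condS (w : List AB) : Prop :=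
  okA w = true ∧ okB w = true ∧ w.head? = some .b ∧ w.getLast? = some .b ∧ altB (dbl w) = true
def condRa (w : List AB) : Prop :=
  okA w = true ∧ okB w = true ∧ w.head? = some .a ∧ w.getLast? = some .b ∧ altB (dbl w) = true
def condRb (w : List AB) : Prop :=
  okA w = true ∧ okB w = true ∧ w.head? = some .b ∧ w.getLast? = some .b ∧ altA (dbl w) = true
def condB (w : List AB) : Prop :=
  okA w = true ∧ okB w = true ∧ w.head? = some .a ∧ w.getLast? = some .b ∧ altA (dbl w) = true

instance (w : List AB) : Decidable (condS w) := by unfold condS; infer_instance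
instance (w : List AB) : Decidable (condRa w) := by unfold condRa; infer_instance
instance (w : List AB) : Decidable (condRb w) := by unfold condRb; infer_instance
instance (w : List AB) : Decidable (condB w) := by unfold condB; infer_instance

noncomputable def fS (p q : ℕ) (w : List AB) : ℚ :=
  if condS w ∧ w.length + 2 = 2 * (p + q) then
    2 ^ (2 * nb w - 1) * co ((p : ℤ) + q - 2 * nb w) ((p : ℤ) - nb w) else 0

noncomputable def fR (p q : ℕ) (w : List AB) : ℚ :=
  if condRa w ∧ w.length + 1 = 2 * (p + q) then
    2 ^ (2 * nb w - 1) * co ((p : ℤ) + q - 2 * nb w) ((p : ℤ) - nb w)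
  else if condRb w ∧ w.length + 1 = 2 * (p + q) then
    4 ^ nb w * co ((p : ℤ) + q - 1 - 2 * nb w) ((p : ℤ) - nb w)
  else 0

noncomputable def fB (p q : ℕ) (w : List AB) : ℚ :=
  if condB w ∧ w.length = 2 * (p + q) then
    4 ^ nb w * co ((p : ℤ) + q - 2 * nb w) ((p : ℤ) - nb w) else 0

/- ## base cases: formulas for single words -/
theorem altA_nb_zero {l : List AB} (h1 : altA l = true) (h2 : l.count .b = 0) : l = [] :=
  altA_count_zero l h1 h2

-- fB p 0 / fB 0 q / fR 0 q equal the corresponding single Finsupps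
theorem single_eq_fB_right (p : ℕ) (hp : 1 ≤ p) (w : List AB) :
    (Finsupp.single (abpow p) (1 : ℚ)) w = fB p 0 w := by
  rw [Finsupp.single_apply]
  unfold fB
  by_cases hw : w = abpow p
  · subst hw
    obtain ⟨h1, h2, h3, _, _, _, _, h8⟩ := abpow_facts p
    obtain ⟨h9, h10⟩ := h8 hp
    rw [if_pos rfl,
      if_pos ⟨⟨h1, h2, h9, h10, by rw [h3]; rfl⟩, by rw [abpow_length]; omega⟩]
    have hn : nb (abpow p) = 0 := by unfold nb; rw [h3]; rfl
    rw [hn]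
    push_cast
    norm_num
    rw [co_self (by positivity)]
  · rw [if_neg (fun h => hw h.symm), eq_comm]
    by_cases hc : condB w ∧ w.length = 2 * (p + 0)
    · rw [if_pos hc]
      obtain ⟨⟨c1, c2, c3, c4, c5⟩, c6⟩ := hc
      by_cases hn : nb w = 0
      · exact absurd (char_a w p (altA_nb_zero c5 hn) c3 c4 (by omega)) hw
      · apply mul_eq_zero_of_right
        apply co_of_not
        push_cast
        omega
    · rw [if_neg hc]

theorem single_eq_fB_left (q : ℕ) (hq : 1 ≤ q) (w : List AB) :
    (Finsupp.single (abpow q) (1 : ℚ)) w = fB 0 q w := by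
  rw [Finsupp.single_apply]
  unfold fB
  by_cases hw : w = abpow q
  · subst hw
    obtain ⟨h1, h2, h3, _, _, _, _, h8⟩ := abpow_facts q
    obtain ⟨h9, h10⟩ := h8 hq
    rw [if_pos rfl,
      if_pos ⟨⟨h1, h2, h9, h10, by rw [h3]; rfl⟩, by rw [abpow_length]; omega⟩]
    have hn : nb (abpow q) = 0 := by unfold nb; rw [h3]; rfl
    rw [hn]
    push_cast
    norm_num
    rw [co_zero (by positivity)]
  · rw [if_neg (fun h => hw h.symm), eq_comm]
    by_cases hc : condB w ∧ w.length = 2 * (0 + q)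
    · rw [if_pos hc]
      obtain ⟨⟨c1, c2, c3, c4, c5⟩, c6⟩ := hc
      by_cases hn : nb w = 0
      · exact absurd (char_a w q (altA_nb_zero c5 hn) c3 c4 (by omega)) hw
      · apply mul_eq_zero_of_right
        apply co_of_not
        push_cast
        omega
    · rw [if_neg hc]

theorem single_eq_fR_zero (q : ℕ) (hq : 1 ≤ q) (w : List AB) :
    (Finsupp.single (.b :: abpow (q - 1)) (1 : ℚ)) w = fR 0 q w := by
  rw [Finsupp.single_apply]
  unfold fR
  by_cases hw : w = .b :: abpow (q - 1)
  · subst hw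
    obtain ⟨_, _, _, h4, h5, h6, h7, _⟩ := abpow_facts (q - 1)
    rw [if_pos rfl, if_neg (by rintro ⟨⟨_, _, c3, _, _⟩, _⟩; simp at c3),
      if_pos ⟨⟨h4, h5, rfl, h7, by rw [h6]; rfl⟩, by simp [abpow_length]; omega⟩]
    have hn : nb (.b :: abpow (q - 1)) = 0 := by unfold nb; rw [h6]; rfl
    rw [hn]
    push_cast
    norm_num
    rw [co_zero (by omega)]
  · rw [if_neg (fun h => hw h.symm), eq_comm]
    by_cases hc1 : condRa w ∧ w.length + 1 = 2 * (0 + q)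
    · rw [if_pos hc1]
      obtain ⟨⟨_, _, _, _, c5⟩, _⟩ := hc1
      have hpos : 1 ≤ nb w := altB_count_pos _ c5
      apply mul_eq_zero_of_right
      apply co_of_not
      push_cast
      omega
    · rw [if_neg hc1]
      by_cases hc2 : condRb w ∧ w.length + 1 = 2 * (0 + q)
      · rw [if_pos hc2]
        obtain ⟨⟨c1, c2, c3, c4, c5⟩, c6⟩ := hc2
        by_cases hn : nb w = 0
        · exact absurd (char_b w (q - 1) (altA_nb_zero c5 hn) c3 c4 (by omega)) hw
        · apply mul_eq_zero_of_right
          apply co_of_not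
          push_cast
          omega
      · rw [if_neg hc2]



/- ## power arithmetic -/
theorem two_pow_sum (n : ℕ) (hn : 1 ≤ n) :
    (2:ℚ) ^ (2 * n - 1) + (2:ℚ) ^ (2 * n - 1) = 4 ^ n := by
  have h4 : (4:ℚ) ^ n = 2 ^ (2 * n) := by
    rw [show (4:ℚ) = 2 ^ 2 by norm_num, ← pow_mul]
  have h2 : (2:ℚ) ^ (2 * n) = 2 ^ (2 * n - 1) * 2 := by
    rw [← pow_succ]
    congr 1
    omega
  rw [h4, h2]; ring

/- ## trivial value lemmas -/
theorem fS_nil (p q : ℕ) : fS p q [] = 0 := by simp [fS, condS]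
theorem fS_cons_a (p q : ℕ) (t : List AB) : fS p q (.a :: t) = 0 := by simp [fS, condS]
theorem fB_nil (p q : ℕ) (h : 1 ≤ p + q) : fB p q [] = 0 := by simp [fB, condB]
theorem fB_cons_b (p q : ℕ) (t : List AB) : fB p q (.b :: t) = 0 := by simp [fB, condB]
theorem fR_nil (p q : ℕ) : fR p q [] = 0 := by simp [fR, condRa, condRb]

/- ## step lemma R-a -/
theorem step_R_a (p q : ℕ) (w' : List AB) : fR p q (.a :: w') = fS p q w' := by
  match w' with
  | [] => simp [fR, fS, condRa, condRb, condS]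
  | .a :: t => simp [fR, fS, condRa, condRb, condS, nb]
  | .b :: t => simp [fR, fS, condRa, condRb, condS, nb, List.getLast?_cons_cons]

/- ## step lemma R-b -/
theorem step_R_b (p q : ℕ) (hp : 1 ≤ p) (hq : 1 ≤ q) (w' : List AB) :
    fR p q (.b :: w') = fB p (q - 1) w' := by
  have hcast : ((q - 1 : ℕ) : ℤ) = (q : ℤ) - 1 := by omega
  match w' with
  | [] =>
      simp [fR, fB, condRa, condRb, condB, nb]
      intro h; omega
  | .a :: t =>
      simp only [fR, fB, condRa, condRb, condB, nb, List.head?_cons,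
        List.getLast?_cons_cons, dbl_ba, okB_ba, okA_cons_b, List.length_cons, hcast]
      have hiff : (q - 1 : ℕ) = q - 1 := rfl
      have hlen : (t.length + 1 + 1 + 1 = 2 * (p + q)) ↔ (t.length + 1 = 2 * (p + (q-1))) := by
        omega
      simp [hlen]
      rw [show (p:ℤ) + ↑q - 1 = ↑p + (↑q - 1) by ring]
  | .b :: t =>
      simp [fR, fB, condRa, condRb, condB, nb]

/- ## co identities for the induction -/
theorem co_key (P Q N : ℤ) (h : 2*N + 1 ≤ P + Q) :
    co (Q + P - 1 - 2*N) (Q - N) + co (P + Q - 1 - 2*N) (P - N) = co (P + Q - 2*N) (P - N) := by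
  have h0 : (0:ℤ) ≤ P + Q - 1 - 2*N := by omega
  have h1 : co (Q + P - 1 - 2*N) (Q - N) = co (P + Q - 1 - 2*N) (P - N - 1) := by
    rw [co_symm]
    congr 1 <;> ring
  rw [h1, show P + Q - 2*N = (P + Q - 1 - 2*N) + 1 by ring, co_pascal _ h0]

theorem co_key2 (P Q N : ℤ) (h : 2*N + 1 ≤ P + Q) :
    co (P - 1 + Q - 2*N) (P - 1 - N) + co (Q - 1 + P - 2*N) (Q - 1 - N) =
      co (P + Q - 2*N) (P - N) := by
  have h0 : (0:ℤ) ≤ P + Q - 1 - 2*N := by omega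
  have h1 : co (Q - 1 + P - 2*N) (Q - 1 - N) = co (P + Q - 1 - 2*N) (P - N) := by
    rw [co_symm]; congr 1 <;> ring
  have h2 : co (P - 1 + Q - 2*N) (P - 1 - N) = co (P + Q - 1 - 2*N) (P - N - 1) := by
    congr 1 <;> ring
  rw [h1, h2, show P + Q - 2*N = (P + Q - 1 - 2*N) + 1 by ring, co_pascal _ h0]

theorem co_key3 (P Q N : ℤ) :
    co (Q - 1 + P - 1 - 2*N) (Q - 1 - N) = co (P - 1 + Q - 1 - 2*N) (P - 1 - N) := by
  rw [co_symm]; congr 1 <;> ring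

theorem co_key4 (P Q N : ℤ) : co (Q + P - 2*N) (Q - N) = co (P + Q - 2*N) (P - N) := by
  rw [co_symm]; congr 1 <;> ring

/- ## step lemma B-a -/
theorem step_B_a (p q : ℕ) (hp : 1 ≤ p) (hq : 1 ≤ q) (w' : List AB) :
    fB p q (.a :: w') = fR q p w' + fR p q w' := by
  match w' with
  | [] => simp [fB, fR, condB, condRa, condRb]
  | .a :: [] => simp [fB, fR, condB, condRa, condRb]
  | .a :: .a :: t => simp [fB, fR, condB, condRa, condRb, nb]
  | .a :: .b :: t =>
      simp only [fB, fR, condB, condRa, condRb, nb, List.head?_cons, List.getLast?_cons_cons,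
        List.length_cons, dbl_aa, dbl_ab, altA_a, altB_a, okA_aab, okA_ab, okB_cons_a,
        List.count_cons, altB_b]
      simp
      simp only [show t.length + 1 + 1 + 1 = 2 * (q + p) ↔ t.length + 1 + 1 + 1 = 2 * (p + q) from by omega]
      by_cases hC : (okA t = true ∧ okB (.b :: t) = true ∧
          (.b :: t : List AB).getLast? = some .b ∧ altB (dbl (.b :: t)) = true) ∧
          t.length + 1 + 1 + 1 = 2 * (p + q)
      · obtain ⟨⟨c1, c2, c4, c5⟩, c6⟩ := hC
        rw [if_pos ⟨⟨c1, c2, c4, c5⟩, c6⟩, if_pos ⟨⟨c1, c2, c4, c5⟩, c6⟩,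
          if_pos ⟨⟨c1, c2, c4, c5⟩, c6⟩]
        have hn1 : 1 ≤ (dbl (.b :: t)).count AB.b := altB_count_pos _ c5
        rw [co_key4 (p:ℤ) (q:ℤ) ((dbl (.b :: t)).count AB.b : ℤ), ← add_mul, two_pow_sum _ hn1]
      · rw [if_neg hC, if_neg hC, if_neg hC]
        norm_num
  | .b :: t =>
      simp only [fB, fR, condB, condRa, condRb, nb, List.head?_cons, List.getLast?_cons_cons,
        List.length_cons, dbl_ab, altA_a, altB_a, okA_ab, okB_cons_a, List.count_cons, altB_b]
      simp
      simp only [show t.length + 1 + 1 = 2 * (q + p) ↔ t.length + 1 + 1 = 2 * (p + q) from by omega]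
      by_cases hC : (okA t = true ∧ okB (.b :: t) = true ∧
          (.b :: t : List AB).getLast? = some .b ∧ altA (dbl (.b :: t)) = true) ∧
          t.length + 1 + 1 = 2 * (p + q)
      · obtain ⟨⟨c1, c2, c4, c5⟩, c6⟩ := hC
        rw [if_pos ⟨⟨c1, c2, c4, c5⟩, c6⟩, if_pos ⟨⟨c1, c2, c4, c5⟩, c6⟩,
          if_pos ⟨⟨c1, c2, c4, c5⟩, c6⟩]
        have h1 := counta_dbl (.b :: t) c1
        have h2 := countb_dbl (.b :: t) c2
        have h3 := length_counts (.b :: t)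
        have h4 : (dbl (.b :: t)).count AB.b = (dbl (.b :: t)).count AB.a :=
          (alt_counts _).1 c5
        set N : ℕ := (dbl (.b :: t)).count AB.b with hN
        have hs : 2 * N + 1 ≤ p + q := by
          simp only [List.length_cons] at h3
          omega
        have hs' : 2 * (N:ℤ) + 1 ≤ (p:ℤ) + (q:ℤ) := by exact_mod_cast hs
        rw [← mul_add, ← co_key (p:ℤ) (q:ℤ) (N:ℤ) hs']
      · rw [if_neg hC, if_neg hC, if_neg hC]
        norm_num

/- ## step lemma S-b -/
theorem step_S_b (p q : ℕ) (hp : 1 ≤ p) (hq : 1 ≤ q) (w' : List AB) :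
    fS p q (.b :: w') = fR (p - 1) q w' + fR (q - 1) p w' := by
  have hcp : ((p - 1 : ℕ) : ℤ) = (p : ℤ) - 1 := by omega
  have hcq : ((q - 1 : ℕ) : ℤ) = (q : ℤ) - 1 := by omega
  match w' with
  | [] => simp [fS, fR, condS, condRa, condRb]
  | .a :: t =>
      simp only [fS, fR, condS, condRa, condRb, nb, List.head?_cons, List.getLast?_cons_cons,
        List.length_cons, dbl_ba, altA_a, altB_a, altB_b, okA_cons_b, okB_ba,
        List.count_cons, hcp, hcq]
      simp
      simp only [show t.length + 1 + 1 = 2 * (p - 1 + q) ↔ t.length + 1 + 1 + 2 = 2 * (p + q) from by omega,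
        show t.length + 1 + 1 = 2 * (q - 1 + p) ↔ t.length + 1 + 1 + 2 = 2 * (p + q) from by omega]
      by_cases hC : (okA (.a :: t) = true ∧ okB t = true ∧
          (.a :: t : List AB).getLast? = some .b ∧ altB (dbl (.a :: t)) = true) ∧
          t.length + 1 + 1 + 2 = 2 * (p + q)
      · obtain ⟨⟨c1, c2, c4, c5⟩, c6⟩ := hC
        rw [if_pos ⟨⟨c1, c2, c4, c5⟩, c6⟩, if_pos ⟨⟨c1, c2, c4, c5⟩, c6⟩,
          if_pos ⟨⟨c1, c2, c4, c5⟩, c6⟩]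
        have h1 := counta_dbl (.a :: t) c1
        have h2 := countb_dbl (.a :: t) c2
        have h3 := length_counts (.a :: t)
        have h4 : (dbl (.a :: t)).count AB.b = (dbl (.a :: t)).count AB.a + 1 :=
          (alt_counts _).2 c5
        set N : ℕ := (dbl (.a :: t)).count AB.b with hN
        have hs : 2 * N + 1 ≤ p + q := by
          simp only [List.length_cons] at h3
          omega
        have hs' : 2 * (N:ℤ) + 1 ≤ (p:ℤ) + (q:ℤ) := by exact_mod_cast hs
        rw [← mul_add, ← co_key2 (p:ℤ) (q:ℤ) (N:ℤ) hs']
      · rw [if_neg hC, if_neg hC, if_neg hC]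
        norm_num
  | .b :: [] =>
      by_cases hl : p + q = 2
      · have hp1 : p = 1 := by omega
        have hq1 : q = 1 := by omega
        subst hp1; subst hq1
        simp [fS, fR, condS, condRa, condRb, nb, dbl, co]
        norm_num
      · simp only [fS, fR]
        rw [if_neg (fun h => hl (by have := h.2; simp at this; omega)),
          if_neg (fun h => hl (by have := h.2; simp at this; omega)),
          if_neg (fun h => hl (by have := h.2; simp at this; omega)),
          if_neg (fun h => hl (by have := h.2; simp at this; omega)),
          if_neg (fun h => hl (by have := h.2; simp at this; omega))]
        norm_num
  | .b :: .a :: t =>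
      simp only [fS, fR, condS, condRa, condRb, nb, List.head?_cons, List.getLast?_cons_cons,
        List.length_cons, dbl_bb, dbl_ba, altB_b, altB_a, altA_a, altA_b, okA_cons_b, okB_bba,
        okB_ba, List.count_cons, hcp, hcq]
      simp
      simp only [show t.length + 1 + 1 + 1 = 2 * (p - 1 + q) ↔ t.length + 1 + 1 + 1 + 2 = 2 * (p + q) from by omega,
        show t.length + 1 + 1 + 1 = 2 * (q - 1 + p) ↔ t.length + 1 + 1 + 1 + 2 = 2 * (p + q) from by omega]
      by_cases hC : (okA (.a :: t) = true ∧ okB t = true ∧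
          (.a :: t : List AB).getLast? = some .b ∧ altA (dbl (.a :: t)) = true) ∧
          t.length + 1 + 1 + 1 + 2 = 2 * (p + q)
      · obtain ⟨⟨c1, c2, c4, c5⟩, c6⟩ := hC
        rw [if_pos ⟨⟨c1, c2, c4, c5⟩, c6⟩, if_pos ⟨⟨c1, c2, c4, c5⟩, c6⟩,
          if_pos ⟨⟨c1, c2, c4, c5⟩, c6⟩]
        set N : ℕ := (dbl (.a :: t)).count AB.b with hN
        rw [co_key3 (p:ℤ) (q:ℤ) (N:ℤ)]
        rw [show 2 * (N + 1) - 1 = 2 * N + 1 from by omega]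
        have hpow : (2:ℚ) ^ (2 * N + 1) = 2 * 4 ^ N := by
          rw [pow_succ, show (4:ℚ) = 2 ^ 2 from by norm_num, ← pow_mul]
          ring
        rw [hpow]
        rw [show (p:ℤ) + ↑q - 2 * ((N:ℤ) + 1) = ↑p - 1 + ↑q - 1 - 2 * ↑N from by ring,
          show (p:ℤ) - ((N:ℤ) + 1) = ↑p - 1 - ↑N from by ring]
        ring
      · rw [if_neg hC, if_neg hC, if_neg hC]
        norm_num
  | .b :: .b :: t =>
      simp [fS, fR, condS, condRa, condRb, nb]

/- ## the main induction -/
theorem hab : (AB.b ≠ AB.a) := by simp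
theorem hba : (AB.a ≠ AB.b) := by simp

theorem main : ∀ w : List AB,
    (∀ p q : ℕ, 1 ≤ p + q → shuffleWord (abpow p) (abpow q) w = fB p q w) ∧
    (∀ p q : ℕ, 1 ≤ q → shuffleWord (abpow p) (AB.b :: abpow (q - 1)) w = fR p q w) ∧
    (∀ p q : ℕ, 1 ≤ p → 1 ≤ q →
      shuffleWord (AB.b :: abpow (p - 1)) (AB.b :: abpow (q - 1)) w = fS p q w) := by
  intro w
  induction w with
  | nil =>
      refine ⟨?_, ?_, ?_⟩
      · intro p q h
        cases p with
        | zero =>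
            rw [abpow_zero, shuffle_nil_left]
            exact single_eq_fB_left q (by omega) []
        | succ p' =>
            cases q with
            | zero =>
                rw [abpow_zero, abpow_succ, shuffle_cons_nil, ← abpow_succ]
                exact single_eq_fB_right (p' + 1) (by omega) []
            | succ q' =>
                rw [abpow_succ p', abpow_succ q', shuffle_cons_cons, Finsupp.add_apply,
                  md_nil, md_nil, fB_nil _ _ (by omega)]
                norm_num
      · intro p q hq
        cases p with
        | zero =>
            rw [abpow_zero, shuffle_nil_left]
            exact single_eq_fR_zero q hq []
        | succ p' =>
            rw [abpow_succ p', shuffle_cons_cons, Finsupp.add_apply, md_nil, md_nil, fR_nil]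
            norm_num
      · intro p q hp hq
        rw [shuffle_cons_cons, Finsupp.add_apply, md_nil, md_nil, fS_nil]
        norm_num
  | cons x w' ih =>
      obtain ⟨ihB, ihR, ihS⟩ := ih
      refine ⟨?_, ?_, ?_⟩
      · intro p q h
        cases p with
        | zero =>
            rw [abpow_zero, shuffle_nil_left]
            exact single_eq_fB_left q (by omega) _
        | succ p' =>
            cases q with
            | zero =>
                rw [abpow_zero, abpow_succ, shuffle_cons_nil, ← abpow_succ]
                exact single_eq_fB_right (p' + 1) (by omega) _
            | succ q' =>
                rw [abpow_succ p', abpow_succ q', shuffle_cons_cons]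
                cases x with
                | a =>
                    rw [Finsupp.add_apply, md_same, md_same]
                    rw [shuffle_comm (.b :: abpow p') (.a :: .b :: abpow q'), ← abpow_succ q',
                      ← abpow_succ p']
                    have e1 := ihR (q' + 1) (p' + 1) (by omega)
                    have e2 := ihR (p' + 1) (q' + 1) (by omega)
                    rw [Nat.add_sub_cancel] at e1 e2
                    rw [e1, e2]
                    exact (step_B_a (p' + 1) (q' + 1) (by omega) (by omega) w').symm
                | b =>
                    rw [Finsupp.add_apply, md_ne hab, md_ne hab, fB_cons_b]
                    norm_num
      · intro p q hq
        cases p with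
        | zero =>
            rw [abpow_zero, shuffle_nil_left]
            exact single_eq_fR_zero q hq _
        | succ p' =>
            rw [abpow_succ p', shuffle_cons_cons]
            cases x with
            | a =>
                rw [Finsupp.add_apply, md_same, md_ne hba]
                have e1 := ihS (p' + 1) q (by omega) hq
                rw [Nat.add_sub_cancel] at e1
                rw [e1]
                rw [add_zero]
                exact (step_R_a (p' + 1) q w').symm
            | b =>
                rw [Finsupp.add_apply, md_ne hab, md_same, ← abpow_succ p']
                rw [ihB (p' + 1) (q - 1) (by omega)]
                rw [zero_add]
                exact (step_R_b (p' + 1) q (by omega) hq w').symm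
      · intro p q hp hq
        rw [shuffle_cons_cons]
        cases x with
        | b =>
            rw [Finsupp.add_apply, md_same, md_same]
            rw [shuffle_comm (.b :: abpow (p - 1)) (abpow (q - 1))]
            rw [ihR (p - 1) q hq, ihR (q - 1) p hp]
            exact (step_S_b p q hp hq w').symm
        | a =>
            rw [Finsupp.add_apply, md_ne hba, md_ne hba, fS_cons_a]
            norm_num

/- ## evaluation of U -/
theorem U_apply (p q n : ℕ) (hp : 1 ≤ p) (hq : 1 ≤ q) (hn1 : 1 ≤ n) (hnp : n ≤ p)
    (hnq : n ≤ q) (w : List AB) :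
    U (p + q) n w = if condS w ∧ w.length + 2 = 2 * (p + q) ∧ countBB w = n then 1 else 0 := by
  unfold U
  rw [if_pos ⟨hn1, by omega⟩, Finsupp.finset_sum_apply,
    Finset.sum_congr rfl (fun w' _ => Finsupp.single_apply),
    Finset.sum_ite_eq' _ w (fun _ => (1:ℚ))]
  have hval := (main w).2.2 n (p + q - n) hn1 (by omega)
  have hiff : (w ∈ Finset.filter (fun w => countBB w = n)
      (shuffleWord (AB.b :: abpow (n - 1)) (AB.b :: abpow (p + q - n - 1))).support) ↔
      (condS w ∧ w.length + 2 = 2 * (p + q) ∧ countBB w = n) := by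
    rw [Finset.mem_filter, Finsupp.mem_support_iff, hval]
    constructor
    · rintro ⟨hne, hbb⟩
      unfold fS at hne
      by_cases hc : condS w ∧ w.length + 2 = 2 * (n + (p + q - n))
      · exact ⟨hc.1, by have := hc.2; omega, hbb⟩
      · rw [if_neg hc] at hne
        exact absurd rfl hne
    · rintro ⟨hc1, hc2, hbb⟩
      refine ⟨?_, hbb⟩
      unfold fS
      rw [if_pos ⟨hc1, by omega⟩]
      have hnb : nb w = n := by
        unfold nb
        rw [← countBB_eq w hc1.2.1, hbb]
      rw [hnb]
      apply mul_ne_zero (by positivity)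
      rw [sub_self, co_zero (by omega)]
      norm_num
  simp only [hiff]

end ABaux

/-- **Proposition (expansion of `b(ab)^{p-1} ⧢ b(ab)^{q-1}` in the basis `U`).**
For all positive integers `p` and `q`,
`b(ab)^{p-1} ⧢ b(ab)^{q-1} = (1/2) Σ_{n=1}^{min(p,q)} 4^n binom(p+q-2n, p-n) U_{p+q,n}`. -/
theorem b_abpow_shuffle_b_abpow (p q : ℕ) (hp : 0 < p) (hq : 0 < q) :
    shuffleWord (AB.b :: abpow (p - 1)) (AB.b :: abpow (q - 1)) =
      (2⁻¹ : ℚ) • ∑ n ∈ Finset.Icc 1 (min p q),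
        ((4 : ℚ) ^ n * (p + q - 2 * n).choose (p - n)) • U (p + q) n := by
  apply Finsupp.ext
  intro w
  rw [(ABaux.main w).2.2 p q hp hq, Finsupp.smul_apply, Finsupp.finset_sum_apply]
  have hterm : ∀ n ∈ Finset.Icc 1 (min p q),
      (((4 : ℚ) ^ n * ((p + q - 2 * n).choose (p - n) : ℚ)) • U (p + q) n) w =
      if ABaux.condS w ∧ w.length + 2 = 2 * (p + q) ∧ countBB w = n then
        (4 : ℚ) ^ n * ((p + q - 2 * n).choose (p - n) : ℚ) else 0 := by
    intro n hn
    simp only [Finset.mem_Icc, le_min_iff] at hn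
    rw [Finsupp.smul_apply,
      ABaux.U_apply p q n hp hq hn.1 hn.2.1 hn.2.2 w]
    by_cases h : ABaux.condS w ∧ w.length + 2 = 2 * (p + q) ∧ countBB w = n
    · rw [if_pos h, if_pos h]; simp
    · rw [if_neg h, if_neg h]; simp
  rw [Finset.sum_congr rfl hterm]
  by_cases hcond : ABaux.condS w ∧ w.length + 2 = 2 * (p + q)
  · have hokB : ABaux.okB w = true := hcond.1.2.1
    have haltB : ABaux.altB (ABaux.dbl w) = true := hcond.1.2.2.2.2
    have hnbeq : countBB w = ABaux.nb w := ABaux.countBB_eq w hokB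
    have hnb1 : 1 ≤ ABaux.nb w := ABaux.altB_count_pos _ haltB
    have hsimp : ∀ n ∈ Finset.Icc 1 (min p q),
        (if ABaux.condS w ∧ w.length + 2 = 2 * (p + q) ∧ countBB w = n then
          (4 : ℚ) ^ n * ((p + q - 2 * n).choose (p - n) : ℚ) else 0) =
        if n = countBB w then (4 : ℚ) ^ n * ((p + q - 2 * n).choose (p - n) : ℚ) else 0 := by
      intro n _
      by_cases hh : n = countBB w
      · rw [if_pos ⟨hcond.1, hcond.2, hh.symm⟩, if_pos hh]
      · rw [if_neg (fun h => hh h.2.2.symm), if_neg hh]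
    rw [Finset.sum_congr rfl hsimp,
      Finset.sum_ite_eq' _ (countBB w)
        (fun n => (4 : ℚ) ^ n * ((p + q - 2 * n).choose (p - n) : ℚ))]
    by_cases hmem : countBB w ∈ Finset.Icc 1 (min p q)
    · rw [if_pos hmem]
      simp only [Finset.mem_Icc, le_min_iff] at hmem
      unfold ABaux.fS
      rw [if_pos ⟨hcond.1, hcond.2⟩, ← hnbeq]
      rw [ABaux.co_of_nonneg ⟨by omega, by omega⟩]
      rw [show ((p:ℤ) + q - 2 * (countBB w : ℤ)).toNat = p + q - 2 * countBB w from by omega,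
        show ((p:ℤ) - (countBB w : ℤ)).toNat = p - countBB w from by omega]
      have h4 : (4:ℚ) ^ (countBB w) = 2 ^ (2 * countBB w - 1) * 2 := by
        rw [← ABaux.two_pow_sum (countBB w) (by omega)]
        ring
      rw [h4, smul_eq_mul]
      ring
    · rw [if_neg hmem]
      simp only [Finset.mem_Icc, le_min_iff] at hmem
      unfold ABaux.fS
      rw [if_pos ⟨hcond.1, hcond.2⟩, ← hnbeq]
      rw [ABaux.co_of_not (by omega)]
      simp
  · unfold ABaux.fS
    rw [if_neg hcond]
    rw [Finset.sum_congr rfl (fun n _ => if_neg (fun h => hcond ⟨h.1, h.2.1⟩))]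
    simp
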